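/- arXiv:1408.1422 — 5 statements merged into one kernel-verified Lean document; each statement's English description precedes it below -/
import Mathlib

section
/- Let n ≥ 3 and let G be a subgroup of the symmetric group on Fin n whose natural action on Fin n is transitive. If G contains a transposition and G contains a cycle of length n − 1 (a permutation that is a cycle whose support has exactly n − 1 elements), then G is the whole symmetric group on Fin n. -/
/-!
Let `a` be the point fixed by the `(n-1)`-cycle `τ`. Conjugating the transposition in `G` by an
element sending one of its points to `a` gives a transposition `(a b)` in `G`, and conjugating
that by the powers of `τ`, which act transitively on the other points, gives every `(a c)`.
These generate the symmetric group.
-/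

open Equiv

namespace Equiv.Perm

variable {α : Type*} [DecidableEq α]

theorem swap_apply_apply_mem {G : Subgroup (Perm α)} {g : Perm α} (hg : g ∈ G) {x y : α}
    (hxy : swap x y ∈ G) : swap (g x) (g y) ∈ G := by
  rw [swap_apply_apply]
  exact G.mul_mem (G.mul_mem hg hxy) (G.inv_mem hg)

theorem exists_swap_mem_of_isSwap_mem {G : Subgroup (Perm α)}
    (htrans : ∀ x y : α, ∃ g ∈ G, g x = y) (hswap : ∃ σ ∈ G, σ.IsSwap) (a : α) :
    ∃ b ≠ a, swap a b ∈ G := by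
  obtain ⟨-, hσ, x, y, hxy, rfl⟩ := hswap
  obtain ⟨g, hg, rfl⟩ := htrans x a
  exact ⟨g y, fun h ↦ hxy (g.injective h).symm, swap_apply_apply_mem hg hσ⟩

theorem swap_mem_of_isCycle [Fintype α] {G : Subgroup (Perm α)} {τ : Perm α} (hτG : τ ∈ G)
    (hτ : τ.IsCycle) {a b c : α} (ha : τ a = a) (hab : swap a b ∈ G) (hb : b ∈ τ.support)
    (hc : c ∈ τ.support) : swap a c ∈ G := by
  obtain ⟨i, rfl⟩ := hτ.exists_zpow_eq (mem_support.1 hb) (mem_support.1 hc)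
  simpa only [zpow_apply_eq_self_of_apply_eq_self ha i] using
    swap_apply_apply_mem (G.zpow_mem hτG i) hab

theorem exists_support_eq_compl_singleton [Fintype α] {σ : Perm α}
    (h : σ.support.card + 1 = Fintype.card α) : ∃ a, σ.support = {a}ᶜ := by
  obtain ⟨a, ha⟩ : ∃ a, σ.supportᶜ = {a} := by
    rw [← Finset.card_eq_one, Finset.card_compl]
    omega
  exact ⟨a, by rw [← ha, compl_compl]⟩

theorem eq_top_of_forall_swap_mem [Finite α] {G : Subgroup (Perm α)} (a : α)
    (h : ∀ c, swap a c ∈ G) : G = ⊤ := by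
  rw [eq_top_iff, ← closure_isSwap, Subgroup.closure_le]
  rintro - ⟨x, y, -, rfl⟩
  exact SubmonoidClass.swap_mem_trans G (swap_comm a x ▸ h x) (h y)

end Equiv.Perm

open Equiv.Perm in
theorem eq_top_of_transitive_of_isSwap_of_cycle_general (n : ℕ)
    (G : Subgroup (Equiv.Perm (Fin n)))
    (htrans : ∀ x y : Fin n, ∃ g ∈ G, g x = y)
    (hswap : ∃ σ ∈ G, σ.IsSwap)
    (hcycle : ∃ τ ∈ G, τ.IsCycle ∧ τ.support.card = n - 1) :
    G = ⊤ := by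
  obtain ⟨τ, hτG, hτ, hcard⟩ := hcycle
  obtain ⟨a, hsupp⟩ : ∃ a, τ.support = {a}ᶜ := by
    have := hτ.two_le_card_support
    exact exists_support_eq_compl_singleton (by rw [Fintype.card_fin]; omega)
  have hsupp_iff (c : Fin n) : c ∈ τ.support ↔ c ≠ a := by simp [hsupp]
  have ha : τ a = a := notMem_support.1 (by simp [hsupp])
  obtain ⟨b, hba, hab⟩ := exists_swap_mem_of_isSwap_mem htrans hswap a
  refine eq_top_of_forall_swap_mem a fun c ↦ ?_
  rcases eq_or_ne c a with rfl | hca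
  · rw [swap_self]
    exact G.one_mem
  · exact swap_mem_of_isCycle hτG hτ ha hab ((hsupp_iff b).2 hba) ((hsupp_iff c).2 hca)

/-- A transitive subgroup of `S_n` (for `n ≥ 3`) containing a transposition and an
`(n-1)`-cycle is the whole symmetric group. -/
theorem eq_top_of_transitive_of_isSwap_of_cycle (n : ℕ) (hn : 3 ≤ n)
    (G : Subgroup (Equiv.Perm (Fin n)))
    (htrans : ∀ x y : Fin n, ∃ g ∈ G, g x = y)
    (hswap : ∃ σ ∈ G, σ.IsSwap)
    (hcycle : ∃ τ ∈ G, τ.IsCycle ∧ τ.support.card = n - 1) :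
    G = ⊤ :=
  eq_top_of_transitive_of_isSwap_of_cycle_general n G htrans hswap hcycle
end

section
/- (Stäckel) Let f be a polynomial with integer coefficients of degree n ≥ 1, and suppose there are 2n + 1 distinct integers k for which the absolute value |f(k)| is a prime number. Then f, viewed as a polynomial over ℚ, is irreducible. -/
open Polynomial

/-- A nonconstant integer polynomial takes values of absolute value `1` at most
`2 * natDegree` times. -/
lemma count_abs_one_le (g : Polynomial ℤ) (hg : 1 ≤ g.natDegree) (S : Finset ℤ) :
    (S.filter fun k => (g.eval k).natAbs = 1).card ≤ 2 * g.natDegree := by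
  have h1 : g - 1 ≠ 0 := by
    intro h
    have : g = 1 := by linear_combination h
    simp [this] at hg
  have h2 : g + 1 ≠ 0 := by
    intro h
    have : g = -1 := by linear_combination h
    simp [this] at hg
  have hsub : (S.filter fun k => (g.eval k).natAbs = 1) ⊆
      (g - 1).roots.toFinset ∪ (g + 1).roots.toFinset := by
    intro k hk
    rw [Finset.mem_filter] at hk
    rcases Int.natAbs_eq_iff.mp hk.2 with h | h
    · apply Finset.mem_union_left
      rw [Multiset.mem_toFinset, mem_roots h1]
      simp [IsRoot, h]
    · apply Finset.mem_union_right
      rw [Multiset.mem_toFinset, mem_roots h2]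
      simp [IsRoot, h]
  have hd1 : (g - 1).natDegree = g.natDegree := by
    rw [show (g - 1 : Polynomial ℤ) = g - C 1 by simp]
    exact natDegree_sub_C
  have hd2 : (g + 1).natDegree = g.natDegree := by
    rw [show (g + 1 : Polynomial ℤ) = g + C 1 by simp]
    exact natDegree_add_C
  calc (S.filter fun k => (g.eval k).natAbs = 1).card
      ≤ ((g - 1).roots.toFinset ∪ (g + 1).roots.toFinset).card := Finset.card_le_card hsub
    _ ≤ (g - 1).roots.toFinset.card + (g + 1).roots.toFinset.card := Finset.card_union_le _ _
    _ ≤ Multiset.card (g - 1).roots + Multiset.card (g + 1).roots :=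
        Nat.add_le_add (Multiset.toFinset_card_le _) (Multiset.toFinset_card_le _)
    _ ≤ (g - 1).natDegree + (g + 1).natDegree := Nat.add_le_add (card_roots' _) (card_roots' _)
    _ = 2 * g.natDegree := by rw [hd1, hd2]; ring

/-- (Stäckel) If an integer polynomial of degree `n ≥ 1` takes prime absolute values at
`2n + 1` distinct integers, then it is irreducible over `ℚ`. -/
theorem irreducible_of_prime_values (f : Polynomial ℤ) (n : ℕ) (hn : 1 ≤ n)
    (hdeg : f.natDegree = n) (S : Finset ℤ) (hS : S.card = 2 * n + 1)
    (hprime : ∀ k ∈ S, Nat.Prime (f.eval k).natAbs) :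
    Irreducible (f.map (Int.castRingHom ℚ)) := by
  have hf0 : f ≠ 0 := by
    intro h
    rw [h] at hdeg
    simp at hdeg
    omega
  -- f is primitive
  have hprim : f.IsPrimitive := by
    intro r hr
    obtain ⟨q, hq⟩ := hr
    have hr0 : r ≠ 0 := by
      rintro rfl
      simp at hq
      exact hf0 hq
    have hq0 : q ≠ 0 := by
      rintro rfl
      simp at hq
      exact hf0 hq
    have hqdeg : q.natDegree = n := by
      rw [hq, natDegree_C_mul hr0] at hdeg
      exact hdeg
    by_contra hru
    have hr1 : r.natAbs ≠ 1 := fun h => hru (Int.isUnit_iff_natAbs_eq.mpr h)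
    have hall : ∀ k ∈ S, (q.eval k).natAbs = 1 := by
      intro k hk
      have hp := hprime k hk
      have hmul : (f.eval k).natAbs = r.natAbs * (q.eval k).natAbs := by
        rw [hq]
        simp [Int.natAbs_mul]
      rcases hp.eq_one_or_self_of_dvd r.natAbs ⟨_, hmul⟩ with h | h
      · exact absurd h hr1
      · have h2 : r.natAbs * (q.eval k).natAbs = r.natAbs * 1 := by
          rw [mul_one, ← hmul]; exact h.symm
        exact Nat.eq_of_mul_eq_mul_left (by omega) h2
    have hfilter : S.filter (fun k => (q.eval k).natAbs = 1) = S :=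
      Finset.filter_true_of_mem hall
    have hcount := count_abs_one_le q (by omega) S
    rw [hfilter, hqdeg, hS] at hcount
    omega
  -- f is irreducible over ℤ
  have hirr : Irreducible f := by
    constructor
    · intro hu
      have := natDegree_eq_zero_of_isUnit hu
      omega
    · intro a b hab
      by_contra hcon
      push_neg at hcon
      obtain ⟨ha, hb⟩ := hcon
      have ha0 : a ≠ 0 := by rintro rfl; simp at hab; exact hf0 hab
      have hb0 : b ≠ 0 := by rintro rfl; simp at hab; exact hf0 hab
      have hadeg : 1 ≤ a.natDegree := by
        by_contra h
        push_neg at h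
        obtain ⟨c, hc⟩ := natDegree_eq_zero.mp (show a.natDegree = 0 by omega)
        exact ha (hc ▸ isUnit_C.mpr (hprim c ⟨b, by rw [hc, ← hab]⟩))
      have hbdeg : 1 ≤ b.natDegree := by
        by_contra h
        push_neg at h
        obtain ⟨c, hc⟩ := natDegree_eq_zero.mp (show b.natDegree = 0 by omega)
        exact hb (hc ▸ isUnit_C.mpr (hprim c ⟨a, by rw [hc, mul_comm]; exact hab⟩))
      have hsum : a.natDegree + b.natDegree = n := by
        rw [← hdeg, hab, natDegree_mul ha0 hb0]
      have hsub : S ⊆ S.filter (fun k => (a.eval k).natAbs = 1) ∪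
          S.filter (fun k => (b.eval k).natAbs = 1) := by
        intro k hk
        have hp := hprime k hk
        have hmul : (f.eval k).natAbs = (a.eval k).natAbs * (b.eval k).natAbs := by
          rw [hab]
          simp [Int.natAbs_mul]
        rcases hp.eq_one_or_self_of_dvd (a.eval k).natAbs ⟨_, hmul⟩ with h | h
        · exact Finset.mem_union_left _ (Finset.mem_filter.mpr ⟨hk, h⟩)
        · have h2 : (a.eval k).natAbs * (b.eval k).natAbs = (a.eval k).natAbs * 1 := by
            rw [mul_one, ← hmul]; exact h.symm
          have := Nat.eq_of_mul_eq_mul_left (by have := hp.pos; omega) h2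
          exact Finset.mem_union_right _ (Finset.mem_filter.mpr ⟨hk, this⟩)
      have hcard := Finset.card_le_card hsub
      have hca := count_abs_one_le a hadeg S
      have hcb := count_abs_one_le b hbdeg S
      have hcu := Finset.card_union_le (S.filter (fun k => (a.eval k).natAbs = 1))
        (S.filter (fun k => (b.eval k).natAbs = 1))
      omega
  have := (hprim.irreducible_iff_irreducible_map_fraction_map (K := ℚ)).mp hirr
  rwa [algebraMap_int_eq] at this
end

section
/- Let q be a prime number such that p = 2q + 1 is also prime (q is a Sophie Germain prime), and let ζ_p = exp(2πi/p). Suppose there is a finite chain of intermediate fields ℚ = F₀ ≤ F₁ ≤ ⋯ ≤ F_m of ℂ over ℚ such that each extension F_{i+1}/F_i has finite degree at most D and ζ_p ∈ F_m. Then D ≥ q. (Hence any root computation tree constructing the concentric drawing of the p-cycle, its adjacency-matrix eigenvalues, or a circle packing of the (p+2)-vertex bipyramid must have degree at least q = (p−1)/2.) -/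
open IntermediateField

/-- If `q` is a Sophie Germain prime (so `p = 2q + 1` is prime) and `ζ_p = exp(2πi/p)`
lies at the top of a finite tower of field extensions of `ℚ` inside `ℂ` each step of which
has finite degree at most `D`, then `D ≥ q`. -/
theorem sophie_germain_root_tree_degree_lower_bound (q : ℕ) (hq : Nat.Prime q)
    (hp : Nat.Prime (2 * q + 1)) (D : ℕ) (m : ℕ)
    (F : Fin (m + 1) → IntermediateField ℚ ℂ) (h0 : F 0 = ⊥)
    (hle : ∀ i : Fin m, F i.castSucc ≤ F i.succ)
    (hfin : ∀ i : Fin m,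
      FiniteDimensional (F i.castSucc) (IntermediateField.extendScalars (hle i)))
    (hdeg : ∀ i : Fin m,
      Module.finrank (F i.castSucc) (IntermediateField.extendScalars (hle i)) ≤ D)
    (hζ : Complex.exp (2 * Real.pi * Complex.I / (2 * q + 1)) ∈ F (Fin.last m)) :
    q ≤ D := by
  set p : ℕ := 2 * q + 1 with hpdef
  set ζ : ℂ := Complex.exp (2 * Real.pi * Complex.I / (2 * q + 1)) with hζdef
  have hprim : IsPrimitiveRoot ζ p := by
    have := Complex.isPrimitiveRoot_exp p hp.ne_zero
    convert this using 3
    push_cast [hpdef]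
    ring
  have hint : IsIntegral ℚ ζ := by
    refine ⟨Polynomial.X ^ p - 1, (Polynomial.monic_X_pow_sub_C 1 hp.ne_zero), ?_⟩
    simp [Polynomial.eval_sub, hprim.pow_eq_one, sub_self]
  have hfr : Module.finrank ℚ ℚ⟮ζ⟯ = 2 * q := by
    rw [IntermediateField.adjoin.finrank hint,
      ← Polynomial.cyclotomic_eq_minpoly_rat hprim hp.pos,
      Polynomial.natDegree_cyclotomic, Nat.totient_prime hp]
    omega
  have hsub : ℚ⟮ζ⟯ ≤ F (Fin.last m) := by
    rw [adjoin_simple_le_iff]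
    exact hζ
  -- key induction: all prime factors of [F_j : ℚ] are ≤ D, and the degree is positive
  have key : ∀ j : ℕ, ∀ hj : j ≤ m,
      0 < relfinrank ⊥ (F ⟨j, Nat.lt_succ_of_le hj⟩) ∧
      ∀ r : ℕ, r.Prime → r ∣ relfinrank ⊥ (F ⟨j, Nat.lt_succ_of_le hj⟩) → r ≤ D := by
    intro j
    induction j with
    | zero =>
      intro hj
      have h00 : F ⟨0, Nat.lt_succ_of_le hj⟩ = ⊥ := h0
      rw [h00, relfinrank_self]
      refine ⟨one_pos, fun r hr hdvd => ?_⟩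
      exact absurd (Nat.dvd_one.mp hdvd) hr.one_lt.ne'
    | succ j ih =>
      intro hj
      have hj' : j ≤ m := Nat.le_of_succ_le hj
      obtain ⟨ihpos, ihprime⟩ := ih hj'
      set i : Fin m := ⟨j, hj⟩ with hidef
      have hb1 : (⊥ : IntermediateField ℚ ℂ) ≤ F i.castSucc := bot_le
      have hmul := relfinrank_mul_relfinrank hb1 (hle i)
      have hstep : relfinrank (F i.castSucc) (F i.succ) =
          Module.finrank (F i.castSucc) (IntermediateField.extendScalars (hle i)) :=
        relfinrank_eq_finrank_of_le (hle i)
      have hsteppos : 0 < relfinrank (F i.castSucc) (F i.succ) := by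
        rw [hstep]
        haveI := hfin i
        exact Module.finrank_pos
      have hcs : F i.castSucc = F ⟨j, Nat.lt_succ_of_le hj'⟩ := rfl
      have hsc : F i.succ = F ⟨j + 1, Nat.lt_succ_of_le hj⟩ := rfl
      rw [hcs] at hmul
      rw [hsc] at hmul
      constructor
      · rw [← hmul]
        exact Nat.mul_pos ihpos hsteppos
      · intro r hr hdvd
        rw [← hmul] at hdvd
        rcases (Nat.Prime.dvd_mul hr).mp hdvd with h | h
        · exact ihprime r hr h
        · exact le_trans (Nat.le_of_dvd hsteppos h) (hstep ▸ hdeg i)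
  obtain ⟨-, hkey⟩ := key m le_rfl
  have hlast : F (Fin.last m) = F ⟨m, Nat.lt_succ_of_le le_rfl⟩ := rfl
  have hmul := relfinrank_mul_relfinrank (bot_le : ⊥ ≤ ℚ⟮ζ⟯) hsub
  rw [relfinrank_bot_left, hfr, hlast] at hmul
  have hq2 : q ∣ relfinrank ⊥ (F ⟨m, Nat.lt_succ_of_le le_rfl⟩) := by
    refine dvd_trans (dvd_mul_left q 2) ?_
    exact Dvd.intro _ hmul
  exact hkey q hq hq2
end

section
/- Let a and b be positive real numbers satisfying the two Fruchterman–Reingold equilibrium equations for the collinear drawing of the path on four vertices: 2a⁵ + 3a⁴b + a³b² − 5a² − 5ab − b² = 0 and −a⁴b − a³b² + a²b³ − a² + ab⁴ − ab + b² = 0. Then b satisfies 3b¹⁵ − 48b¹² + 336b⁹ − 1196b⁶ + 1440b³ + 144 = 0. -/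
/-- If positive reals `a`, `b` satisfy the two Fruchterman–Reingold equilibrium equations
for the collinear drawing of the path on four vertices, then `b` is a root of
`3b¹⁵ − 48b¹² + 336b⁹ − 1196b⁶ + 1440b³ + 144`. -/
theorem fr_path_equilibrium_resultant (a b : ℝ) (ha : 0 < a) (hb : 0 < b)
    (h1 : 2 * a ^ 5 + 3 * a ^ 4 * b + a ^ 3 * b ^ 2 - 5 * a ^ 2 - 5 * a * b - b ^ 2 = 0)
    (h2 : -a ^ 4 * b - a ^ 3 * b ^ 2 + a ^ 2 * b ^ 3 - a ^ 2 + a * b ^ 4 - a * b + b ^ 2 = 0) :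
    3 * b ^ 15 - 48 * b ^ 12 + 336 * b ^ 9 - 1196 * b ^ 6 + 1440 * b ^ 3 + 144 = 0 := by
  have hb2 : (b : ℝ) ^ 2 ≠ 0 := pow_ne_zero 2 hb.ne'
  have key : b ^ 2 * (3 * b ^ 15 - 48 * b ^ 12 + 336 * b ^ 9 - 1196 * b ^ 6 + 1440 * b ^ 3 + 144) = 0 := by
    linear_combination (3 * a^3 * ((-16/3) * b^3 + (8/3) * b^6 + (-16/3) * b^9 + (2) * b^12)) * h1 + (3 * a^2 * ((-8) * b^1 + (-212/3) * b^4 + (104/3) * b^7 + (-14/3) * b^10 + (1) * b^13)) * h1 + (3 * a^1 * ((-16/3) * b^2 + (-88/3) * b^5 + (52/3) * b^8 + (8/3) * b^11 + (-2) * b^14)) * h1 + (3 * a^0 * ((-8) + (-212/3) * b^3 + (144) * b^6 + (-190/3) * b^9 + (9) * b^12 + (-1) * b^15)) * h1 + (3 * a^4 * ((-32/3) * b^2 + (16/3) * b^5 + (-32/3) * b^8 + (4) * b^11)) * h2 + (3 * a^3 * ((-16) + (-440/3) * b^3 + (72) * b^6 + (-44/3) * b^9 + (4) * b^12)) * h2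 + (3 * a^2 * ((-8) * b^1 + (-436/3) * b^4 + (256/3) * b^7 + (-14) * b^10 + (1) * b^13)) * h2 + (3 * a^1 * ((32/3) * b^2 + (80/3) * b^5 + (4) * b^8 + (-8) * b^11)) * h2 + (3 * a^0 * ((40) + (1228/3) * b^3 + (-764/3) * b^6 + (146/3) * b^9 + (-7) * b^12)) * h2
  exact (mul_eq_zero.mp key).resolve_left hb2
end

section
/- The polynomial h(x) = x⁵ + 60x⁴ − 299x³ + 504x² − 432x + 162 is irreducible over ℚ, has exactly 5 complex roots, and its Galois group over ℚ acts on its set of complex roots as the full symmetric group S₅ (the natural map from the Galois group of h to the permutation group of the set of complex roots of h is bijective). -/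
open Polynomial

/-- The quintic arising from the Fruchterman–Reingold equilibrium of the path on four
vertices. -/
noncomputable def frQuintic : Polynomial ℚ :=
  X ^ 5 + 60 * X ^ 4 - 299 * X ^ 3 + 504 * X ^ 2 - 432 * X + 162

instance : Fact ((frQuintic.map (algebraMap ℚ ℂ)).Splits) :=
  ⟨IsAlgClosed.splits (frQuintic.map (algebraMap ℚ ℂ))⟩

/-!
Since `h` is monic with integer coefficients, it is irreducible as soon as its reduction modulo
`11` is. Over `𝔽₁₁` an irreducible factor of a divisor of `X ^ 11 ^ 5 - X` has degree dividing `5`,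
so a quintic without roots in `𝔽₁₁` that divides `X ^ 11 ^ 5 - X` is irreducible; both facts are
finite computations.

An irreducible polynomial of prime degree with exactly two non-real roots has Galois group `S₅`.
Sign changes on `[0, 1]` and `[1, 3]` give two real roots. Inverting the (nonzero) real roots
maps them into those of the reversed polynomial `162x⁵ - 432x⁴ + 504x³ - 299x² + 60x + 1`, whose
third derivative is a quadratic of negative discriminant, so by Rolle there are at most three.
-/

namespace Polynomial

theorem irreducible_of_natDegree_prime_of_dvd_X_pow_card_pow_sub_X {k : Type*} [Field k]
    {f : k[X]} (hf : f.natDegree.Prime) (hroot : ∀ x, ¬f.IsRoot x)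
    (hdvd : f ∣ X ^ Nat.card k ^ f.natDegree - X) : Irreducible f := by
  have hf0 : f ≠ 0 := by rintro rfl; exact Nat.not_prime_zero (by simpa using hf)
  have hunit : ¬IsUnit f := fun hu => hf.ne_zero (natDegree_eq_zero_of_isUnit hu)
  obtain ⟨g, hg, hgf⟩ := WfDvdMonoid.exists_irreducible_factor hunit hf0
  rcases (Nat.dvd_prime hf).1 (hg.natDegree_dvd_of_dvd_X_pow_card_pow_sub_X (hgf.trans hdvd))
    with hg1 | hgf'
  · obtain ⟨x, hx⟩ :=
      exists_root_of_degree_eq_one ((degree_eq_iff_natDegree_eq_of_pos one_pos).2 hg1)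
    exact (hroot x (eval_eq_zero_of_dvd_of_eval_eq_zero hgf hx)).elim
  · exact (associated_of_dvd_of_natDegree_le hgf hf0 hgf'.ge).irreducible hg

theorem card_rootSet_le_card_rootSet_reverse {K L : Type*} [Field K] [Field L] [Algebra K L]
    {p : K[X]} (h0 : p.coeff 0 ≠ 0) :
    Fintype.card (p.rootSet L) ≤ Fintype.card (p.reverse.rootSet L) := by
  have hp : p ≠ 0 := by rintro rfl; exact h0 (coeff_zero 0)
  refine Fintype.card_le_of_injective (fun x => ⟨(x : L)⁻¹, ?_⟩)
    fun x y h => Subtype.ext (inv_injective (congrArg Subtype.val h))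
  obtain ⟨x, hx⟩ := x
  rw [mem_rootSet] at hx ⊢
  have hx0 : x ≠ 0 := by
    rintro rfl
    exact h0 ((algebraMap K L).injective (by simpa [coeff_zero_eq_aeval_zero'] using hx.2))
  let := invertibleOfNonzero hx0
  refine ⟨reverse_eq_zero.not.2 hp, ?_⟩
  rw [aeval_def, ← invOf_eq_inv, eval₂_reverse_eq_zero_iff, ← aeval_def]
  exact hx.2

theorem card_rootSet_le_iterate_derivative {F : Type*} [CommRing F] [Algebra F ℝ] (p : F[X])
    (k : ℕ) : Fintype.card (p.rootSet ℝ) ≤ Fintype.card ((derivative^[k] p).rootSet ℝ) + k := by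
  induction k generalizing p with
  | zero => exact le_rfl
  | succ k ih =>
    rw [Function.iterate_succ_apply]
    linarith [card_rootSet_le_derivative p, ih (derivative p)]

theorem exists_mem_rootSet_Ioo_of_aeval_mul_neg {F : Type*} [Field F] [Algebra F ℝ] {p : F[X]}
    {a b : ℝ} (hab : a ≤ b) (h : aeval a p * aeval b p < 0) :
    ∃ x ∈ p.rootSet ℝ, x ∈ Set.Ioo a b := by
  have hp : p ≠ 0 := by rintro rfl; simp at h
  have hcont : ContinuousOn (fun x : ℝ => aeval x p) (Set.Icc a b) := p.continuousOn_aeval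
  suffices ∃ x ∈ Set.Ioo a b, aeval x p = 0 by
    obtain ⟨x, hx, hx0⟩ := this
    exact ⟨x, mem_rootSet.2 ⟨hp, hx0⟩, hx⟩
  rcases mul_neg_iff.1 h with ⟨ha, hb⟩ | ⟨ha, hb⟩
  · exact intermediate_value_Ioo' hab hcont ⟨hb, ha⟩
  · exact intermediate_value_Ioo hab hcont ⟨ha, hb⟩

end Polynomial

instance Nat.fact_prime_eleven : Fact (Nat.Prime 11) := ⟨by norm_num⟩

noncomputable def frQuinticInt : ℤ[X] :=
  X ^ 5 + 60 * X ^ 4 - 299 * X ^ 3 + 504 * X ^ 2 - 432 * X + 162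

theorem frQuinticInt_monic : frQuinticInt.Monic := by
  unfold frQuinticInt; monicity!

theorem frQuinticInt_natDegree : frQuinticInt.natDegree = 5 := by
  unfold frQuinticInt; compute_degree!

theorem map_frQuinticInt : frQuinticInt.map (Int.castRingHom ℚ) = frQuintic := by
  simp [frQuinticInt, frQuintic]

theorem aeval_frQuinticInt {A : Type*} [CommRing A] (x : A) :
    aeval x frQuinticInt = x ^ 5 + 60 * x ^ 4 - 299 * x ^ 3 + 504 * x ^ 2 - 432 * x + 162 := by
  simp only [frQuinticInt, map_add, map_sub, map_mul, map_pow, aeval_X, map_ofNat]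

theorem pow_eleven_pow_five_of_aeval_frQuinticInt {A : Type*} [CommRing A] [CharP A 11] {β : A}
    (hβ : aeval β frQuinticInt = 0) : β ^ 11 ^ 5 = β := by
  rw [aeval_frQuinticInt] at hβ
  -- Each step raises the previous identity to the 11th power. Frobenius is a ring endomorphism,
  -- so `cₖ(β) ^ 11 = cₖ(β ^ 11) = cₖ(c₁(β))`; the multiplier of `hβ` is the quotient of
  -- `cₖ(c₁(X))` by the quintic over `𝔽₁₁`.
  have h1 : β ^ 11 = 5 * β ^ 4 + 3 * β ^ 3 + 8 * β ^ 2 + 2 * β + 9 := by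
    linear_combination (norm := (ring_nf; reduce_mod_char!))
      (β ^ 6 + 6 * β ^ 5 + 5 * β ^ 4 + 3 * β ^ 2 + 5 * β + 3) * hβ
  have h2 : β ^ 11 ^ 2 = 3 * β ^ 4 + 7 * β ^ 3 + 6 * β ^ 2 + 7 * β + 7 := by
    rw [pow_succ, pow_mul, pow_one, h1, ← frobenius_def]
    simp only [map_add, map_mul, map_pow, map_ofNat, frobenius_def, h1]
    linear_combination (norm := (ring_nf; reduce_mod_char!))
      (β ^ 11 + 4 * β ^ 10 + 2 * β ^ 9 + 8 * β ^ 8 + 6 * β ^ 7 + 5 * β ^ 6 + 2 * β ^ 5 +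
        3 * β ^ 3 + 6 * β ^ 2 + 9 * β + 8) * hβ
  have h3 : β ^ 11 ^ 3 = 10 * β ^ 3 + 4 * β ^ 2 + 5 * β + 6 := by
    rw [pow_succ, pow_mul, h2, ← frobenius_def]
    simp only [map_add, map_mul, map_pow, map_ofNat, frobenius_def, h1]
    linear_combination (norm := (ring_nf; reduce_mod_char!))
      (5 * β ^ 11 + 9 * β ^ 10 + 10 * β ^ 9 + 7 * β ^ 8 + 9 * β ^ 7 + 2 * β ^ 6 + 2 * β ^ 4 +
        4 * β ^ 3 + 2 * β ^ 2 + 10) * hβ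
  have h4 : β ^ 11 ^ 4 = 3 * β ^ 4 + 2 * β ^ 3 + 4 * β ^ 2 + 7 * β + 6 := by
    rw [pow_succ, pow_mul, h3, ← frobenius_def]
    simp only [map_add, map_mul, map_pow, map_ofNat, frobenius_def, h1]
    linear_combination (norm := (ring_nf; reduce_mod_char!))
      (7 * β ^ 7 + 4 * β ^ 6 + 7 * β ^ 5 + 3 * β ^ 4 + 2 * β ^ 2 + 4 * β + 10) * hβ
  rw [pow_succ, pow_mul, h4, ← frobenius_def]
  simp only [map_add, map_mul, map_pow, map_ofNat, frobenius_def, h1]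
  linear_combination (norm := (ring_nf; reduce_mod_char!))
    (5 * β ^ 11 + 9 * β ^ 10 + 10 * β ^ 9 + 7 * β ^ 8 + 2 * β ^ 5 + 6 * β ^ 4 + 4 * β ^ 3 +
      β ^ 2 + 9 * β + 5) * hβ

theorem irreducible_map_frQuinticInt_zmod_eleven :
    Irreducible (frQuinticInt.map (Int.castRingHom (ZMod 11))) := by
  set f := frQuinticInt.map (Int.castRingHom (ZMod 11))
  have hdeg : f.natDegree = 5 := by
    rw [frQuinticInt_monic.natDegree_map, frQuinticInt_natDegree]
  refine irreducible_of_natDegree_prime_of_dvd_X_pow_card_pow_sub_X (hdeg ▸ Nat.prime_five) ?_ ?_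
  · intro x hx
    rw [IsRoot, eval_map, ← algebraMap_int_eq, ← aeval_def, aeval_frQuinticInt] at hx
    revert x hx
    decide
  · have : Nontrivial (AdjoinRoot f) := AdjoinRoot.nontrivial f (by
      rw [degree_eq_natDegree (frQuinticInt_monic.map _).ne_zero, hdeg]; decide)
    have : CharP (AdjoinRoot f) 11 :=
      charP_of_injective_algebraMap (algebraMap (ZMod 11) _).injective 11
    rw [hdeg, Nat.card_zmod, ← AdjoinRoot.mk_eq_zero, map_sub, map_pow, AdjoinRoot.mk_X,
      sub_eq_zero]
    refine pow_eleven_pow_five_of_aeval_frQuinticInt ?_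
    rw [← aeval_map_algebraMap (ZMod 11), algebraMap_int_eq, AdjoinRoot.aeval_eq,
      AdjoinRoot.mk_self]

theorem frQuintic_irreducible : Irreducible frQuintic := by
  rw [← map_frQuinticInt]
  exact (IsPrimitive.Int.irreducible_iff_irreducible_map_cast frQuinticInt_monic.isPrimitive).1
    (frQuinticInt_monic.irreducible_of_irreducible_map _ _ irreducible_map_frQuinticInt_zmod_eleven)

theorem frQuintic_natDegree : frQuintic.natDegree = 5 := by
  unfold frQuintic; compute_degree!

theorem card_rootSet_complex_frQuintic : Fintype.card (frQuintic.rootSet ℂ) = 5 :=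
  (card_rootSet_eq_natDegree frQuintic_irreducible.separable (IsAlgClosed.splits _)).trans
    frQuintic_natDegree

theorem reverse_frQuintic :
    frQuintic.reverse = 162 * X ^ 5 - 432 * X ^ 4 + 504 * X ^ 3 - 299 * X ^ 2 + 60 * X + 1 := by
  have : frQuintic = C 1 * X ^ 5 + C 60 * X ^ 4 + C (-299) * X ^ 3 + C 504 * X ^ 2 +
      C (-432) * X ^ 1 + C 162 * X ^ 0 := by
    simp only [frQuintic, C_1, C_neg, C_ofNat]; ring
  rw [reverse, frQuintic_natDegree, this]
  simp (disch := norm_num) only [reflect_add, reflect_C_mul_X_pow, revAt_le]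
  simp only [C_1, C_neg, C_ofNat]
  ring

theorem iterate_derivative_three_reverse_frQuintic :
    derivative^[3] frQuintic.reverse = 9720 * X ^ 2 - 10368 * X + 3024 := by
  rw [reverse_frQuintic]
  norm_num [Function.iterate_succ, C_ofNat]
  ring

theorem card_rootSet_real_frQuintic_le : Fintype.card (frQuintic.rootSet ℝ) ≤ 3 := by
  have hrev :=
    card_rootSet_le_card_rootSet_reverse (L := ℝ) (p := frQuintic) (by simp [frQuintic])
  have hder := card_rootSet_le_iterate_derivative frQuintic.reverse 3
  have hquad : Fintype.card ((derivative^[3] frQuintic.reverse).rootSet ℝ) = 0 := by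
    rw [Fintype.card_eq_zero_iff, iterate_derivative_three_reverse_frQuintic]
    refine ⟨fun ⟨x, hx⟩ => ?_⟩
    rw [mem_rootSet] at hx
    simp only [map_add, map_sub, map_mul, map_pow, map_ofNat, aeval_X] at hx
    nlinarith [sq_nonneg (15 * x - 8)]
  omega

theorem two_le_card_rootSet_real_frQuintic : 2 ≤ Fintype.card (frQuintic.rootSet ℝ) := by
  have heval (x : ℝ) : aeval x frQuintic =
      x ^ 5 + 60 * x ^ 4 - 299 * x ^ 3 + 504 * x ^ 2 - 432 * x + 162 := by
    simp only [frQuintic, map_add, map_sub, map_mul, map_pow, map_ofNat, aeval_X]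
  obtain ⟨x, hx, hx01⟩ := exists_mem_rootSet_Ioo_of_aeval_mul_neg (p := frQuintic) zero_le_one
    (by norm_num [heval])
  obtain ⟨y, hy, hy13⟩ := exists_mem_rootSet_Ioo_of_aeval_mul_neg (p := frQuintic)
    (by norm_num : (1 : ℝ) ≤ 3) (by norm_num [heval])
  refine Fintype.one_lt_card_iff.2 ⟨⟨x, hx⟩, ⟨y, hy⟩, fun h => ?_⟩
  have : x = y := congrArg Subtype.val h
  linarith [hx01.2, hy13.1]

/-- `h(x) = x⁵ + 60x⁴ − 299x³ + 504x² − 432x + 162` is irreducible over `ℚ`, has exactly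
`5` complex roots, and its Galois group acts on its complex roots as the full symmetric
group `S₅`. -/
theorem frQuintic_irreducible_card_roots_and_gal_eq_symmetric :
    Irreducible frQuintic ∧ Fintype.card (frQuintic.rootSet ℂ) = 5 ∧
      Function.Bijective (Polynomial.Gal.galActionHom frQuintic ℂ) := by
  have hreal_le := card_rootSet_real_frQuintic_le
  have hreal_ge := two_le_card_rootSet_real_frQuintic
  refine ⟨frQuintic_irreducible, card_rootSet_complex_frQuintic,
    Gal.galActionHom_bijective_of_prime_degree' frQuintic_irreducible ?_ ?_ ?_⟩
  · rw [frQuintic_natDegree]; exact Nat.prime_five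
  all_goals rw [card_rootSet_complex_frQuintic]; omega
end
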